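/- arXiv:2508.05356 — 4 statements merged into one kernel-verified Lean document; each statement's English description precedes it below -/
import Mathlib

section
/- Let n be a finite index type, A : Matrix n n ℂ a square complex matrix, and v : n → ℂ a vector. Then Matrix.exp ((t : ℂ) • A) *ᵥ v = v holds for every real number t if and only if A *ᵥ v = 0. (This is the equivalence between invariance under all finite gauge transformations e^{tA} and the infinitesimal Gauss-law constraint A v = 0.) -/
/-! The curve `t ↦ exp (t • A) *ᵥ v` has derivative `exp (t • A) *ᵥ (A *ᵥ v)`. If the curve is
constant, this derivative at `t = 0` is `A *ᵥ v = 0`; conversely, if `A *ᵥ v = 0` the derivative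
vanishes everywhere, so the curve stays at its value `v` at `t = 0`. -/

open NormedSpace Matrix

open scoped Norms.Operator in
theorem Matrix.hasDerivAt_exp_smul_mulVec {𝕂 𝔸 n : Type*} [RCLike 𝕂] [NormedCommRing 𝔸]
    [NormedAlgebra 𝕂 𝔸] [CompleteSpace 𝔸] [Fintype n] [DecidableEq n]
    (A : Matrix n n 𝔸) (v : n → 𝔸) (t : 𝕂) :
    HasDerivAt (fun u : 𝕂 => exp (u • A) *ᵥ v) (exp (t • A) *ᵥ (A *ᵥ v)) t := by
  -- The operator norm induces the product uniformity only up to defeq, so instance search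
  -- does not find completeness for it.
  have : @CompleteSpace (Matrix n n 𝔸) PseudoMetricSpace.toUniformSpace :=
    inferInstanceAs (CompleteSpace (n → n → 𝔸))
  let mulVecCLM : Matrix n n 𝔸 →L[𝕂] (n → 𝔸) :=
    { toLinearMap := (mulVecBilin 𝕂 𝔸).flip v
      cont := continuous_id.matrix_mulVec continuous_const }
  rw [mulVec_mulVec]
  exact mulVecCLM.hasFDerivAt.comp_hasDerivAt t (hasDerivAt_exp_smul_const A t)

/-- A vector `v` is fixed by every finite gauge transformation `exp (t • A)` (for all real
`t`) if and only if it satisfies the infinitesimal Gauss-law constraint `A v = 0`. -/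
theorem exp_smul_mulVec_eq_self_iff_mulVec_eq_zero
    {n : Type*} [Fintype n] [DecidableEq n] (A : Matrix n n ℂ) (v : n → ℂ) :
    (∀ t : ℝ, exp ((t : ℂ) • A) *ᵥ v = v) ↔ A *ᵥ v = 0 := by
  have hderiv (t : ℝ) := hasDerivAt_exp_smul_mulVec A v t
  simp_rw [Complex.coe_smul]
  constructor
  · intro hfixed
    have hconst : HasDerivAt (fun t : ℝ => exp (t • A) *ᵥ v) 0 0 := by
      simpa only [hfixed] using hasDerivAt_const (0 : ℝ) v
    simpa using (hderiv 0).unique hconst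
  · intro hker t
    have hderiv_zero (s : ℝ) : deriv (fun t : ℝ => exp (t • A) *ᵥ v) s = 0 := by
      rw [(hderiv s).deriv, hker, mulVec_zero]
    simpa using is_const_of_deriv_eq_zero (fun s => (hderiv s).differentiableAt) hderiv_zero t 0
end

section
/- Let G be a group, set R := MonoidAlgebra ℂ G, let S be a simple R-module that is finite-dimensional as a ℂ-vector space, and let M be any R-module. Consider the ℂ-linear evaluation map ev : S ⊗[ℂ] (S →ₗ[R] M) → M determined by ev(s ⊗ f) = f s. Then ev is injective, and its range, viewed as a ℂ-subspace of M, equals the underlying ℂ-subspace of the S-isotypic component of M. -/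
/-!
Burnside's theorem (Jacobson density plus Schur's lemma over `ℂ`) says that `MonoidAlgebra ℂ G`
acts on `S` through all of `End_ℂ S`, and `ev (a • s ⊗ f) = a • ev (s ⊗ f)`. Writing an element of
the kernel as `∑ⱼ eⱼ ⊗ gⱼ` for a basis `(eⱼ)` of `S` and acting by an element that sends `eⱼ` to `s`
and kills the other basis vectors gives `gⱼ s = 0`. For the range: a nonzero `f : S → M` is injective
because `S` is simple, so the ranges of such maps are exactly the submodules isomorphic to `S`.
-/

open TensorProduct

/-- The `ℂ`-linear evaluation map `S ⊗[ℂ] (S →ₗ[R] M) → M`, `s ⊗ f ↦ f s`, where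
`R = MonoidAlgebra ℂ G`. -/
noncomputable def isotypicEval (G : Type*) [Group G]
    (S : Type*) [AddCommGroup S] [Module ℂ S]
    [Module (MonoidAlgebra ℂ G) S] [IsScalarTower ℂ (MonoidAlgebra ℂ G) S]
    (M : Type*) [AddCommGroup M] [Module ℂ M]
    [Module (MonoidAlgebra ℂ G) M] [IsScalarTower ℂ (MonoidAlgebra ℂ G) M]
    [SMulCommClass (MonoidAlgebra ℂ G) ℂ M] :
    S ⊗[ℂ] (S →ₗ[MonoidAlgebra ℂ G] M) →ₗ[ℂ] M :=
  TensorProduct.lift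
    (LinearMap.mk₂ ℂ (fun s f => f s)
      (fun s t f => map_add f s t)
      (fun c s f => by
        simp only [← algebraMap_smul (MonoidAlgebra ℂ G) c s]
        rw [map_smul, algebraMap_smul])
      (fun s f g => rfl)
      (fun c s f => rfl))

section Burnside

variable (k : Type*) {A S : Type*} [Field k] [Ring A] [Algebra k A]
  [AddCommGroup S] [Module k S] [Module A S] [IsScalarTower k A S]

theorem IsSimpleModule.exists_forall_apply_eq_smul_of_isAlgClosed [IsAlgClosed k]
    [IsSimpleModule A S] [FiniteDimensional k S] (φ : Module.End k S) :
    ∃ a : A, ∀ s, φ s = a • s := by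
  classical
  have hφ : ∀ (g : Module.End A S) s, φ (g s) = g (φ s) := by
    intro g s
    obtain ⟨c, rfl⟩ := (IsSimpleModule.algebraMap_end_bijective_of_isAlgClosed k).2 g
    simp [Module.algebraMap_end_apply]
  let b := Module.finBasis k S
  obtain ⟨a, ha⟩ := jacobson_density (R := A) ⟨φ.toAddMonoidHom, hφ⟩ (Finset.univ.image b)
  refine ⟨a, LinearMap.congr_fun (b.ext (f₂ := DistribSMul.toLinearMap k S a) fun i => ?_)⟩
  exact ha (b i) (Finset.mem_image_of_mem b (Finset.mem_univ i))

end Burnside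

section Evaluation

variable {k A S M : Type*} [Field k] [Ring A]
  [AddCommGroup S] [Module k S] [Module A S]
  [AddCommGroup M] [Module k M] [Module A M] [SMulCommClass A k M]
  (ev : S ⊗[k] (S →ₗ[A] M) →ₗ[k] M) (hev : ∀ s f, ev (s ⊗ₜ f) = f s)
include hev

theorem injective_of_tmul_eq_apply (hdense : ∀ φ : Module.End k S, ∃ a : A, ∀ s, φ s = a • s) :
    Function.Injective ev := by
  rw [injective_iff_map_eq_zero]
  intro x hx
  let b := Module.Basis.ofVectorSpace k S
  obtain ⟨g, rfl⟩ := TensorProduct.eq_repr_basis_left b x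
  have hg : ∀ a : A, (g.sum fun i f => f (a • b i)) = 0 := by
    intro a
    simp_rw [map_smul]
    rw [← Finsupp.smul_sum]
    simpa [map_finsuppSum, hev] using congr(a • $hx)
  suffices g = 0 by simp [this]
  ext j s
  obtain ⟨a, ha⟩ := hdense ((b.coord j).smulRight s)
  have := hg a
  simp only [← ha, LinearMap.smulRight_apply, Module.Basis.coord_apply,
    Module.Basis.repr_self] at this
  rwa [Finsupp.sum, Finset.sum_eq_single j
    (fun i _ hij => by simp [Finsupp.single_eq_of_ne' hij])
    (fun hj => by simp [Finsupp.notMem_support_iff.mp hj]), Finsupp.single_eq_same,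
    one_smul] at this

theorem range_eq_iSup_range_of_tmul_eq_apply [SMul k A] [IsScalarTower k A M] :
    LinearMap.range ev = (⨆ f : S →ₗ[A] M, LinearMap.range f).restrictScalars k := by
  apply le_antisymm
  · rw [LinearMap.range_eq_map, ← TensorProduct.span_tmul_eq_top, Submodule.map_span,
      Submodule.span_le]
    rintro _ ⟨_, ⟨s, f, rfl⟩, rfl⟩
    rw [hev]
    exact Submodule.mem_iSup_of_mem f (LinearMap.mem_range_self f s)
  · rw [Submodule.restrictScalars_iSup]
    refine iSup_le fun f => ?_
    rintro _ ⟨s, rfl⟩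
    exact ⟨s ⊗ₜ f, hev s f⟩

end Evaluation

theorem isotypicComponent_eq_iSup_range {R M S : Type*} [Ring R] [AddCommGroup M] [Module R M]
    [AddCommGroup S] [Module R S] [IsSimpleModule R S] :
    isotypicComponent R M S = ⨆ f : S →ₗ[R] M, LinearMap.range f := by
  apply le_antisymm
  · refine sSup_le fun p ⟨e⟩ => le_trans ?_ (le_iSup _ (p.subtype ∘ₗ e.symm.toLinearMap))
    intro m hm
    exact ⟨e ⟨m, hm⟩, by simp⟩
  · refine iSup_le fun f => ?_
    obtain hf | rfl := f.injective_or_eq_zero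
    · exact le_sSup ⟨(LinearEquiv.ofInjective f hf).symm⟩
    · simp

/-- Let `R = MonoidAlgebra ℂ G`, `S` a simple `R`-module that is finite-dimensional over
`ℂ`, and `M` any `R`-module.  The evaluation map `S ⊗[ℂ] (S →ₗ[R] M) → M`, `s ⊗ f ↦ f s`,
is injective and its range is the underlying `ℂ`-subspace of the `S`-isotypic component
of `M`. -/
theorem isotypicEval_injective_and_range
    (G : Type*) [Group G]
    (S : Type*) [AddCommGroup S] [Module ℂ S]
    [Module (MonoidAlgebra ℂ G) S] [IsScalarTower ℂ (MonoidAlgebra ℂ G) S]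
    [IsSimpleModule (MonoidAlgebra ℂ G) S] [FiniteDimensional ℂ S]
    (M : Type*) [AddCommGroup M] [Module ℂ M]
    [Module (MonoidAlgebra ℂ G) M] [IsScalarTower ℂ (MonoidAlgebra ℂ G) M]
    [SMulCommClass (MonoidAlgebra ℂ G) ℂ M] :
    Function.Injective (isotypicEval G S M) ∧
      LinearMap.range (isotypicEval G S M) =
        Submodule.restrictScalars ℂ
          (sSup {p : Submodule (MonoidAlgebra ℂ G) M |
            IsSimpleModule (MonoidAlgebra ℂ G) p ∧
              Nonempty (p ≃ₗ[MonoidAlgebra ℂ G] S)}) := by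
  have hev : ∀ s f, isotypicEval G S M (s ⊗ₜ f) = f s := fun _ _ => rfl
  have hisotypic : sSup {p : Submodule (MonoidAlgebra ℂ G) M |
      IsSimpleModule (MonoidAlgebra ℂ G) p ∧ Nonempty (p ≃ₗ[MonoidAlgebra ℂ G] S)} =
      isotypicComponent (MonoidAlgebra ℂ G) M S :=
    congrArg sSup <| Set.ext fun p => and_iff_right_of_imp fun ⟨e⟩ => .congr e
  refine ⟨injective_of_tmul_eq_apply _ hev
    (IsSimpleModule.exists_forall_apply_eq_smul_of_isAlgClosed ℂ), ?_⟩
  rw [range_eq_iSup_range_of_tmul_eq_apply _ hev, hisotypic, isotypicComponent_eq_iSup_range]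
end

section
/- Let G be a finite group, let d and d' be positive integers, and let ρ : G →* Matrix.unitaryGroup (Fin d) ℂ and σ : G →* Matrix.unitaryGroup (Fin d') ℂ be unitary matrix representations, each irreducible in the sense that the only subspaces of Fin d → ℂ (resp. Fin d' → ℂ) invariant under multiplication by every ρ(g) (resp. σ(g)) are 0 and the whole space. Assume ρ and σ are not isomorphic: there is no invertible matrix T : Matrix (Fin d') (Fin d) ℂ with σ(g) * T = T * ρ(g) for all g ∈ G. Then for all indices m, n ∈ Fin d and p, q ∈ Fin d', Σ_{g ∈ G} (ρ(g)) m n * conj((σ(g)) p q) = 0. (Schur orthogonality of matrix coefficients of inequivalent irreducibles, the finite-group case of the Peter–Weyl orthogonality relations.) -/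
/-!
Averaging `single p m 1` over `G` as `∑ g, σ g⁻¹ * single p m 1 * ρ g` gives a matrix
intertwining `ρ` and `σ`. By Schur's lemma it is zero or invertible, and inequivalence rules
out invertibility. Its `(q, n)` entry is the sum in question, since unitarity turns
`σ g⁻¹ q p` into `conj (σ g p q)`.
-/

open Matrix

namespace Matrix

variable {ι κ R : Type*} [Fintype ι] [Fintype κ] [DecidableEq κ]

theorem exists_mul_eq_one_of_bijective_toLin' [DecidableEq ι] [CommSemiring R] {T : Matrix ι κ R}
    (hT : Function.Bijective (toLin' T)) : ∃ S : Matrix κ ι R, T * S = 1 ∧ S * T = 1 := by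
  let e := LinearEquiv.ofBijective (toLin' T) hT
  refine ⟨LinearMap.toMatrix' e.symm.toLinearMap, toLin'.injective ?_, toLin'.injective ?_⟩
  · rw [toLin'_mul, toLin'_toMatrix', toLin'_one]
    exact e.comp_symm
  · rw [toLin'_mul, toLin'_toMatrix', toLin'_one]
    exact e.symm_comp

theorem mul_single_mul_apply [DecidableEq ι] [NonUnitalNonAssocSemiring R] {l o : Type*}
    (A : Matrix l ι R) (i : ι) (j : κ) (c : R) (B : Matrix κ o R) (a : l) (b : o) :
    (A * single i j c * B) a b = A a i * c * B j b := by
  simp [mul_apply, single, ite_and]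

section Schur

variable [CommRing R] {G : Type*} {ρ : G → Matrix ι ι R} {σ : G → Matrix κ κ R}
  {T : Matrix ι κ R}

theorem ker_toLin'_invariant_of_intertwines (hT : ∀ g, ρ g * T = T * σ g) (g : G)
    {v : κ → R} (hv : v ∈ LinearMap.ker (toLin' T)) : σ g *ᵥ v ∈ LinearMap.ker (toLin' T) := by
  rw [LinearMap.mem_ker, toLin'_apply] at hv ⊢
  rw [mulVec_mulVec, ← hT, ← mulVec_mulVec, hv, mulVec_zero]

theorem range_toLin'_invariant_of_intertwines (hT : ∀ g, ρ g * T = T * σ g) (g : G)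
    {v : ι → R} (hv : v ∈ LinearMap.range (toLin' T)) :
    ρ g *ᵥ v ∈ LinearMap.range (toLin' T) := by
  obtain ⟨w, rfl⟩ := hv
  exact ⟨σ g *ᵥ w, by simp only [toLin'_apply, mulVec_mulVec, hT]⟩

theorem eq_zero_or_exists_inverse_of_intertwines [DecidableEq ι]
    (hρ : ∀ p : Submodule R (ι → R), (∀ g, ∀ v ∈ p, ρ g *ᵥ v ∈ p) → p = ⊥ ∨ p = ⊤)
    (hσ : ∀ p : Submodule R (κ → R), (∀ g, ∀ v ∈ p, σ g *ᵥ v ∈ p) → p = ⊥ ∨ p = ⊤)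
    (hT : ∀ g, ρ g * T = T * σ g) : T = 0 ∨ ∃ S : Matrix κ ι R, T * S = 1 ∧ S * T = 1 := by
  refine or_iff_not_imp_left.mpr fun hT0 => exists_mul_eq_one_of_bijective_toLin' ?_
  have hf : toLin' T ≠ 0 := toLin'.map_ne_zero_iff.mpr hT0
  have hker : LinearMap.ker (toLin' T) = ⊥ :=
    (hσ _ fun g _ => ker_toLin'_invariant_of_intertwines hT g).resolve_right
      (mt LinearMap.ker_eq_top.mp hf)
  have hrange : LinearMap.range (toLin' T) = ⊤ :=
    (hρ _ fun g _ => range_toLin'_invariant_of_intertwines hT g).resolve_left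
      (mt LinearMap.range_eq_bot.mp hf)
  exact ⟨LinearMap.ker_eq_bot.mp hker, LinearMap.range_eq_top.mp hrange⟩

end Schur

theorem mul_sum_inv_mul_mul [DecidableEq ι] {G : Type*} [Group G] [Fintype G] [Semiring R]
    (ρ : G →* Matrix ι ι R) (σ : G →* Matrix κ κ R) (A : Matrix κ ι R) (h : G) :
    σ h * ∑ g, σ g⁻¹ * A * ρ g = (∑ g, σ g⁻¹ * A * ρ g) * ρ h := by
  rw [Matrix.mul_sum, Matrix.sum_mul]
  refine Fintype.sum_equiv (Equiv.mulRight h⁻¹) _ _ fun g => ?_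
  have hσ : σ (g * h⁻¹)⁻¹ = σ h * σ g⁻¹ := by rw [_root_.mul_inv_rev, inv_inv, map_mul]
  have hρ : ρ g = ρ (g * h⁻¹) * ρ h := by rw [← map_mul, inv_mul_cancel_right]
  simp only [Equiv.coe_mulRight, hσ, hρ, Matrix.mul_assoc]

end Matrix

theorem schur_orthogonality_inequivalent_general
    {G : Type*} [Group G] [Fintype G] (d d' : ℕ)
    (ρ : G →* Matrix.unitaryGroup (Fin d) ℂ)
    (σ : G →* Matrix.unitaryGroup (Fin d') ℂ)
    (hρirr : ∀ p : Submodule ℂ (Fin d → ℂ),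
      (∀ g : G, ∀ v ∈ p, (ρ g : Matrix (Fin d) (Fin d) ℂ) *ᵥ v ∈ p) → p = ⊥ ∨ p = ⊤)
    (hσirr : ∀ p : Submodule ℂ (Fin d' → ℂ),
      (∀ g : G, ∀ v ∈ p, (σ g : Matrix (Fin d') (Fin d') ℂ) *ᵥ v ∈ p) → p = ⊥ ∨ p = ⊤)
    (hniso : ¬ ∃ T : Matrix (Fin d') (Fin d) ℂ,
      (∃ T' : Matrix (Fin d) (Fin d') ℂ, T * T' = 1 ∧ T' * T = 1) ∧
        ∀ g : G, (σ g : Matrix (Fin d') (Fin d') ℂ) * T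
          = T * (ρ g : Matrix (Fin d) (Fin d) ℂ))
    (m n : Fin d) (p q : Fin d') :
    ∑ g : G, (ρ g : Matrix (Fin d) (Fin d) ℂ) m n *
        (starRingEnd ℂ) ((σ g : Matrix (Fin d') (Fin d') ℂ) p q) = 0 := by
  let ρ' := (unitaryGroup (Fin d) ℂ).subtype.comp ρ
  let σ' := (unitaryGroup (Fin d') ℂ).subtype.comp σ
  have hint := mul_sum_inv_mul_mul ρ' σ' (single p m (1 : ℂ))
  have hzero : ∑ g, σ' g⁻¹ * single p m (1 : ℂ) * ρ' g = 0 :=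
    (eq_zero_or_exists_inverse_of_intertwines hσirr hρirr hint).resolve_right
      fun ⟨S, hS, hS'⟩ => hniso ⟨_, ⟨S, hS, hS'⟩, hint⟩
  have hentry := congrFun (congrFun hzero q) n
  simpa [ρ', σ', Matrix.sum_apply, star_apply, mul_single_mul_apply, mul_comm] using hentry

/-- **Schur orthogonality (inequivalent case).** For two irreducible unitary matrix
representations `ρ`, `σ` of a finite group `G` that are not isomorphic, the matrix
coefficients are orthogonal: `Σ_g (ρ g) m n * conj((σ g) p q) = 0`. -/
theorem schur_orthogonality_inequivalent
    {G : Type*} [Group G] [Fintype G] (d d' : ℕ) (hd : 0 < d) (hd' : 0 < d')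
    (ρ : G →* Matrix.unitaryGroup (Fin d) ℂ)
    (σ : G →* Matrix.unitaryGroup (Fin d') ℂ)
    (hρirr : ∀ p : Submodule ℂ (Fin d → ℂ),
      (∀ g : G, ∀ v ∈ p, (ρ g : Matrix (Fin d) (Fin d) ℂ) *ᵥ v ∈ p) → p = ⊥ ∨ p = ⊤)
    (hσirr : ∀ p : Submodule ℂ (Fin d' → ℂ),
      (∀ g : G, ∀ v ∈ p, (σ g : Matrix (Fin d') (Fin d') ℂ) *ᵥ v ∈ p) → p = ⊥ ∨ p = ⊤)
    (hniso : ¬ ∃ T : Matrix (Fin d') (Fin d) ℂ,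
      (∃ T' : Matrix (Fin d) (Fin d') ℂ, T * T' = 1 ∧ T' * T = 1) ∧
        ∀ g : G, (σ g : Matrix (Fin d') (Fin d') ℂ) * T
          = T * (ρ g : Matrix (Fin d) (Fin d) ℂ))
    (m n : Fin d) (p q : Fin d') :
    ∑ g : G, (ρ g : Matrix (Fin d) (Fin d) ℂ) m n *
        (starRingEnd ℂ) ((σ g : Matrix (Fin d') (Fin d') ℂ) p q) = 0 :=
  schur_orthogonality_inequivalent_general d d' ρ σ hρirr hσirr hniso m n p q
end

section
/- Let G be a finite group, d a positive integer, and ρ : G →* Matrix.unitaryGroup (Fin d) ℂ a unitary matrix representation that is irreducible (the only subspaces of Fin d → ℂ invariant under multiplication by every ρ(g) are 0 and the whole space). Then for all indices m, n, p, q ∈ Fin d, (1 / |G|) * Σ_{g ∈ G} (ρ(g)) m n * conj((ρ(g)) p q) = (1 / d) * (if m = p then 1 else 0) * (if n = q then 1 else 0). (Schur orthogonality of the matrix coefficients of a single irreducible unitary representation of a finite group.) -/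
/-!
Average the matrix unit `E_{nq}` over the group: `T = ∑ g, ρ g * E_{nq} * (ρ g)⁻¹` commutes with
every `ρ h`, so by Schur's lemma it is a scalar `c • 1`. Comparing traces gives
`c * d = |G| * δ_{nq}`, and since `(ρ g)⁻¹ = (ρ g)ᴴ` for unitary `ρ g`, the `(m, p)` entry of `T` is
exactly the sum `∑ g, ρ(g)_{mn} * conj ρ(g)_{pq}`.
-/

open Matrix

def Matrix.IsIrreducibleFamily {𝕜 ι G : Type*} [Semiring 𝕜] [Fintype ι]
    (ρ : G → Matrix ι ι 𝕜) : Prop :=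
  ∀ p : Submodule 𝕜 (ι → 𝕜), (∀ g, ∀ v ∈ p, ρ g *ᵥ v ∈ p) → p = ⊥ ∨ p = ⊤

theorem MonoidHom.commute_sum_conj {G A : Type*} [Group G] [Fintype G] [Semiring A]
    (ρ : G →* A) (X : A) (h : G) : Commute (ρ h) (∑ g, ρ g * X * ρ g⁻¹) := by
  change ρ h * _ = _ * ρ h
  rw [Finset.mul_sum, Finset.sum_mul]
  refine Fintype.sum_equiv (Equiv.mulLeft h) _ _ fun g => ?_
  change _ = ρ (h * g) * X * ρ (h * g)⁻¹ * ρ h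
  rw [mul_assoc _ (ρ _), ← map_mul, _root_.mul_inv_rev, inv_mul_cancel_right, map_mul]
  simp only [mul_assoc]

theorem MonoidHom.trace_sum_conj {G R ι : Type*} [Group G] [Fintype G] [CommSemiring R]
    [Fintype ι] [DecidableEq ι] (ρ : G →* Matrix ι ι R) (X : Matrix ι ι R) :
    trace (∑ g, ρ g * X * ρ g⁻¹) = Fintype.card G * trace X := by
  simp only [trace_sum, trace_mul_cycle, ← map_mul, inv_mul_cancel, map_one, one_mul,
    Finset.sum_const, Finset.card_univ, nsmul_eq_mul]

theorem Matrix.trace_single {R ι : Type*} [AddCommMonoid R] [Fintype ι] [DecidableEq ι]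
    (i j : ι) (c : R) : trace (single i j c) = if i = j then c else 0 := by
  split_ifs with h
  · exact h ▸ trace_single_eq_same i c
  · exact trace_single_eq_of_ne i j c h

theorem Matrix.mul_single_mul_apply_s19 {R ι : Type*} [Semiring R] [Fintype ι] [DecidableEq ι]
    (A B : Matrix ι ι R) (c : R) (i j k l : ι) :
    (A * single j k c * B) i l = A i j * c * B k l := by
  simp [mul_apply, single, ite_and, Finset.sum_ite_eq]

namespace Matrix.IsIrreducibleFamily

variable {𝕜 ι G : Type*} [Field 𝕜] [IsAlgClosed 𝕜] [Fintype ι] [DecidableEq ι] [Nonempty ι]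

/-- Schur's lemma: an eigenspace of `T` is invariant, hence everything. -/
theorem exists_eq_smul_one {ρ : G → Matrix ι ι 𝕜} (hρ : IsIrreducibleFamily ρ)
    {T : Matrix ι ι 𝕜} (hT : ∀ g, Commute (ρ g) T) : ∃ c : 𝕜, T = c • 1 := by
  obtain ⟨μ, hμ⟩ := Module.End.exists_eigenvalue T.mulVecLin
  have hinv : ∀ g, ∀ v ∈ Module.End.eigenspace T.mulVecLin μ,
      ρ g *ᵥ v ∈ Module.End.eigenspace T.mulVecLin μ := by
    intro g v hv
    rw [Module.End.mem_eigenspace_iff, mulVecLin_apply] at hv ⊢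
    rw [mulVec_mulVec, ← (hT g).eq, ← mulVec_mulVec, hv, mulVec_smul]
  have htop := (hρ _ hinv).resolve_left hμ
  refine ⟨μ, ext_iff_mulVec.2 fun v => ?_⟩
  rw [smul_mulVec, one_mulVec, ← mulVecLin_apply, ← Module.End.mem_eigenspace_iff, htop]
  exact Submodule.mem_top

theorem sum_conj_eq_smul_one [CharZero 𝕜] [Group G] [Fintype G] {ρ : G →* Matrix ι ι 𝕜}
    (hρ : IsIrreducibleFamily ρ) (X : Matrix ι ι 𝕜) :
    ∑ g, ρ g * X * ρ g⁻¹ = (Fintype.card G * trace X / Fintype.card ι) • 1 := by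
  obtain ⟨c, hc⟩ := hρ.exists_eq_smul_one (ρ.commute_sum_conj X)
  have htrace := ρ.trace_sum_conj X
  rw [hc, trace_smul, trace_one, smul_eq_mul] at htrace
  rw [hc, ← htrace, mul_div_cancel_right₀ _ (Nat.cast_ne_zero.2 Fintype.card_ne_zero)]

end Matrix.IsIrreducibleFamily

theorem schur_orthogonality_self_general
    {G : Type*} [Group G] [Fintype G] (d : ℕ)
    (ρ : G →* Matrix.unitaryGroup (Fin d) ℂ)
    (hρirr : ∀ p : Submodule ℂ (Fin d → ℂ),
      (∀ g : G, ∀ v ∈ p, (ρ g : Matrix (Fin d) (Fin d) ℂ) *ᵥ v ∈ p) → p = ⊥ ∨ p = ⊤)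
    (m n p q : Fin d) :
    (1 / (Fintype.card G : ℂ)) *
        ∑ g : G, (ρ g : Matrix (Fin d) (Fin d) ℂ) m n *
          (starRingEnd ℂ) ((ρ g : Matrix (Fin d) (Fin d) ℂ) p q)
      = (1 / (d : ℂ)) * (if m = p then 1 else 0) * (if n = q then 1 else 0) := by
  have : Nonempty (Fin d) := ⟨m⟩
  set ρ' : G →* Matrix (Fin d) (Fin d) ℂ := (unitaryGroup (Fin d) ℂ).subtype.comp ρ
  have hcoef : ∀ g, (ρ' g * single n q 1 * ρ' g⁻¹ : Matrix (Fin d) (Fin d) ℂ) m p =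
      (ρ g : Matrix (Fin d) (Fin d) ℂ) m n *
        (starRingEnd ℂ) ((ρ g : Matrix (Fin d) (Fin d) ℂ) p q) :=
    fun g => by simp [ρ', mul_single_mul_apply_s19, star_apply]
  have hentry := congrFun₂
    (IsIrreducibleFamily.sum_conj_eq_smul_one (ρ := ρ') hρirr (single n q 1)) m p
  simp only [Matrix.sum_apply, hcoef, trace_single, Matrix.smul_apply, one_apply,
    Fintype.card_fin, smul_eq_mul] at hentry
  have hG : Fintype.card G ≠ 0 := Fintype.card_ne_zero
  rw [hentry]
  field_simp

/-- **Schur orthogonality (single irreducible).** For an irreducible unitary matrix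
representation `ρ` of a finite group `G` on `Fin d → ℂ`,
`(1/|G|) Σ_g (ρ g) m n * conj((ρ g) p q) = (1/d) δ_{mp} δ_{nq}`. -/
theorem schur_orthogonality_self
    {G : Type*} [Group G] [Fintype G] (d : ℕ) (hd : 0 < d)
    (ρ : G →* Matrix.unitaryGroup (Fin d) ℂ)
    (hρirr : ∀ p : Submodule ℂ (Fin d → ℂ),
      (∀ g : G, ∀ v ∈ p, (ρ g : Matrix (Fin d) (Fin d) ℂ) *ᵥ v ∈ p) → p = ⊥ ∨ p = ⊤)
    (m n p q : Fin d) :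
    (1 / (Fintype.card G : ℂ)) *
        ∑ g : G, (ρ g : Matrix (Fin d) (Fin d) ℂ) m n *
          (starRingEnd ℂ) ((ρ g : Matrix (Fin d) (Fin d) ℂ) p q)
      = (1 / (d : ℂ)) * (if m = p then 1 else 0) * (if n = q then 1 else 0) :=
  schur_orthogonality_self_general d ρ hρirr m n p q
end
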